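/- For the polynomial Δ(r) = r⁴ + (a²+1)r² − 2𝔪r + a² with parameters 𝔪 > 0 and |a| < 1: Δ has a positive real root if and only if 𝔪 ≥ (1/(3√6)) (√(1+14a²+a⁴) + 2a² + 2) (√(1+14a²+a⁴) − a² − 1)^{1/2}, and equality holds precisely when Δ has a double positive root. -/

import Mathlib

/-- The Kerr–AdS horizon polynomial `Δ(r) = r⁴ + (a²+1)r² − 2𝔪r + a²` with `Λ = -3`. -/
noncomputable def KerrAdSΔ (mfr a r : ℝ) : ℝ :=
  r ^ 4 + (a ^ 2 + 1) * r ^ 2 - 2 * mfr * r + a ^ 2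

/-- The critical (extremal) mass parameter for Kerr–AdS. -/
noncomputable def mcrit (a : ℝ) : ℝ :=
  (1 / (3 * Real.sqrt 6)) * (Real.sqrt (1 + 14 * a ^ 2 + a ^ 4) + 2 * a ^ 2 + 2) *
    Real.sqrt (Real.sqrt (1 + 14 * a ^ 2 + a ^ 4) - a ^ 2 - 1)

/-!
Let `b ≥ 0` be the root of `3b⁴ + (a²+1)b² = a²`. Then `mcrit a = 2b³ + (a²+1)b`, and at this mass
`Δ(r) = (r - b)² (r² + 2br + 3b² + a² + 1)`, which is nonnegative for `r ≥ 0`. Since `Δ` decreases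
in the mass linearly with slope `-2r`, a positive root exists exactly for `𝔪 ≥ mcrit a` (by the
intermediate value theorem for the converse). At a double root, `r Δ'(r) - Δ(r) = 3r⁴ + (a²+1)r² - a²`
vanishes, which pins `r = b` and then `𝔪 = mcrit a`.
-/

open Real

lemma KerrAdSΔ_eq_sub (m m' a r : ℝ) :
    KerrAdSΔ m a r = KerrAdSΔ m' a r - 2 * (m - m') * r := by
  unfold KerrAdSΔ; ring

lemma continuous_KerrAdSΔ (m a : ℝ) : Continuous (KerrAdSΔ m a) := by
  unfold KerrAdSΔ; fun_prop

lemma deriv_KerrAdSΔ (m a r : ℝ) :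
    deriv (KerrAdSΔ m a) r = 4 * r ^ 3 + 2 * (a ^ 2 + 1) * r - 2 * m := by
  have h := ((((hasDerivAt_pow 4 r).add ((hasDerivAt_pow 2 r).const_mul (a ^ 2 + 1))).sub
      ((hasDerivAt_id' r).const_mul (2 * m))).add_const (a ^ 2))
  exact (h.congr_deriv (by push_cast; ring)).deriv

lemma KerrAdSΔ_nonneg_of_le {m a r : ℝ} (h1 : 1 ≤ r) (hm : 2 * m ≤ r) :
    0 ≤ KerrAdSΔ m a r := by
  have hr : 0 ≤ r := by linarith
  unfold KerrAdSΔ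
  nlinarith [mul_nonneg (sq_nonneg r) (by nlinarith : 0 ≤ r ^ 2 - 1),
    mul_nonneg hr (sub_nonneg.mpr hm), sq_nonneg a]

noncomputable def extremalRadius (a : ℝ) : ℝ :=
  √((√(1 + 14 * a ^ 2 + a ^ 4) - a ^ 2 - 1) / 6)

section extremalRadius

variable (a : ℝ)

lemma extremalRadius_nonneg : 0 ≤ extremalRadius a := sqrt_nonneg _

lemma sqrt_discr_eq_extremalRadius :
    √(1 + 14 * a ^ 2 + a ^ 4) = 6 * extremalRadius a ^ 2 + a ^ 2 + 1 := by
  have hle : a ^ 2 + 1 ≤ √(1 + 14 * a ^ 2 + a ^ 4) :=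
    (le_sqrt (by positivity) (by positivity)).mpr (by nlinarith [sq_nonneg a])
  rw [extremalRadius, sq_sqrt (by linarith)]
  ring

lemma extremalRadius_eq :
    3 * extremalRadius a ^ 4 + (a ^ 2 + 1) * extremalRadius a ^ 2 = a ^ 2 := by
  have h := sq_sqrt (by positivity : (0:ℝ) ≤ 1 + 14 * a ^ 2 + a ^ 4)
  rw [sqrt_discr_eq_extremalRadius] at h
  linear_combination h / 12

lemma mcrit_eq_extremalRadius :
    mcrit a = 2 * extremalRadius a ^ 3 + (a ^ 2 + 1) * extremalRadius a := by
  set b := extremalRadius a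
  have hsqrt : √(√(1 + 14 * a ^ 2 + a ^ 4) - a ^ 2 - 1) = √6 * b := by
    rw [sqrt_discr_eq_extremalRadius, show 6 * b ^ 2 + a ^ 2 + 1 - a ^ 2 - 1 = 6 * b ^ 2 by ring,
      sqrt_mul (by norm_num), sqrt_sq (extremalRadius_nonneg a)]
  rw [mcrit, hsqrt, sqrt_discr_eq_extremalRadius]
  field_simp
  ring

lemma KerrAdSΔ_mcrit (r : ℝ) :
    KerrAdSΔ (mcrit a) a r = (r - extremalRadius a) ^ 2 *
      (r ^ 2 + 2 * extremalRadius a * r + 3 * extremalRadius a ^ 2 + a ^ 2 + 1) := by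
  rw [KerrAdSΔ, mcrit_eq_extremalRadius]
  linear_combination -extremalRadius_eq a

lemma KerrAdSΔ_mcrit_nonneg {r : ℝ} (hr : 0 ≤ r) : 0 ≤ KerrAdSΔ (mcrit a) a r := by
  rw [KerrAdSΔ_mcrit]
  have := extremalRadius_nonneg a
  positivity

lemma eq_extremalRadius {r : ℝ} (hr : 0 ≤ r) (h : 3 * r ^ 4 + (a ^ 2 + 1) * r ^ 2 = a ^ 2) :
    r = extremalRadius a := by
  set b := extremalRadius a
  have hfactor : (r ^ 2 - b ^ 2) * (3 * r ^ 2 + 3 * b ^ 2 + a ^ 2 + 1) = 0 := by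
    linear_combination h - extremalRadius_eq a
  have hpos : 3 * r ^ 2 + 3 * b ^ 2 + a ^ 2 + 1 ≠ 0 := by positivity
  exact (sq_eq_sq₀ hr (extremalRadius_nonneg a)).mp
    (sub_eq_zero.mp ((mul_eq_zero.mp hfactor).resolve_right hpos))

end extremalRadius

lemma mcrit_le_of_KerrAdSΔ_eq_zero {m a r : ℝ} (hr : 0 < r) (h : KerrAdSΔ m a r = 0) :
    mcrit a ≤ m := by
  have := KerrAdSΔ_mcrit_nonneg a hr.le
  rw [KerrAdSΔ_eq_sub m (mcrit a)] at h
  nlinarith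

lemma exists_pos_KerrAdSΔ_nonpos {m a : ℝ} (hm : 0 < m) (hle : mcrit a ≤ m) :
    ∃ c > 0, KerrAdSΔ m a c ≤ 0 := by
  rcases (extremalRadius_nonneg a).eq_or_lt with hb | hb
  · -- `b = 0` forces `a = 0`, so `Δ(r) = r⁴ + r² - 2𝔪r` is negative for small `r`
    have ha : a ^ 2 = 0 := by simpa [← hb] using (extremalRadius_eq a).symm
    refine ⟨min m 1, lt_min hm one_pos, ?_⟩
    have h1 : min m 1 ≤ m := min_le_left _ _
    have h2 : min m 1 ≤ 1 := min_le_right _ _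
    have h3 : 0 < min m 1 := lt_min hm one_pos
    rw [KerrAdSΔ, ha]
    nlinarith [mul_nonneg (sq_nonneg (min m 1)) (by nlinarith : 0 ≤ 1 - min m 1 ^ 2),
      mul_nonneg h3.le (sub_nonneg.mpr h1)]
  · refine ⟨extremalRadius a, hb, ?_⟩
    rw [KerrAdSΔ_eq_sub m (mcrit a), KerrAdSΔ_mcrit]
    nlinarith [mul_nonneg (sub_nonneg.mpr hle) hb.le]

lemma exists_pos_root_of_mcrit_le {m a : ℝ} (hm : 0 < m) (hle : mcrit a ≤ m) :
    ∃ r > 0, KerrAdSΔ m a r = 0 := by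
  obtain ⟨c, hc, hfc⟩ := exists_pos_KerrAdSΔ_nonpos hm hle
  set R := max c (max 1 (2 * m))
  have hfR : 0 ≤ KerrAdSΔ m a R :=
    KerrAdSΔ_nonneg_of_le (le_trans (le_max_left _ _) (le_max_right _ _))
      (le_trans (le_max_right _ _) (le_max_right _ _))
  obtain ⟨r, hr, hfr⟩ := intermediate_value_Icc (le_max_left _ _)
    (continuous_KerrAdSΔ m a).continuousOn ⟨hfc, hfR⟩
  exact ⟨r, hc.trans_le hr.1, hfr⟩

lemma eq_mcrit_of_double_root {m a r : ℝ} (hr : 0 < r) (h : KerrAdSΔ m a r = 0)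
    (hd : deriv (KerrAdSΔ m a) r = 0) : m = mcrit a := by
  rw [deriv_KerrAdSΔ] at hd
  rw [KerrAdSΔ] at h
  have hrb := eq_extremalRadius a hr.le (by linear_combination r * hd - h)
  rw [mcrit_eq_extremalRadius, ← hrb]
  linear_combination -hd / 2

lemma exists_double_root_mcrit {a : ℝ} (hm : 0 < mcrit a) :
    ∃ r > 0, KerrAdSΔ (mcrit a) a r = 0 ∧ deriv (KerrAdSΔ (mcrit a) a) r = 0 := by
  have hb : 0 < extremalRadius a := by
    rw [mcrit_eq_extremalRadius] at hm
    nlinarith [extremalRadius_nonneg a, sq_nonneg a, sq_nonneg (extremalRadius a)]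
  refine ⟨extremalRadius a, hb, by rw [KerrAdSΔ_mcrit]; ring, ?_⟩
  rw [deriv_KerrAdSΔ, mcrit_eq_extremalRadius]
  ring

theorem stmt4_general (mfr a : ℝ) (hm : 0 < mfr) :
    ((∃ r > 0, KerrAdSΔ mfr a r = 0) ↔ mcrit a ≤ mfr) ∧
      (mfr = mcrit a ↔ ∃ r > 0, KerrAdSΔ mfr a r = 0 ∧ deriv (KerrAdSΔ mfr a) r = 0) := by
  refine ⟨⟨fun ⟨r, hr, h⟩ => mcrit_le_of_KerrAdSΔ_eq_zero hr h,
    exists_pos_root_of_mcrit_le hm⟩, ⟨?_, fun ⟨r, hr, h, hd⟩ => eq_mcrit_of_double_root hr h hd⟩⟩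
  rintro rfl
  exact exists_double_root_mcrit hm

theorem stmt4 (mfr a : ℝ) (hm : 0 < mfr) (ha : |a| < 1) :
    ((∃ r > 0, KerrAdSΔ mfr a r = 0) ↔ mcrit a ≤ mfr) ∧
      (mfr = mcrit a ↔ ∃ r > 0, KerrAdSΔ mfr a r = 0 ∧ deriv (KerrAdSΔ mfr a) r = 0) :=
  stmt4_general mfr a hm
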